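/- arXiv:1201.0171 — 2 statements merged into one kernel-verified Lean document; each statement's English description precedes it below -/
import Mathlib

section
/- If n ≡ ℓ (mod 4d) for some odd ℓ with 2d+1 ≤ ℓ ≤ 4d-1, then SG(n) = 0. -/
/-- mex of the two-element set {a, b}: the least natural number not in {a, b}. -/
def mex2 (a b : ℕ) : ℕ :=
  if 0 ≠ a ∧ 0 ≠ b then 0 else if 1 ≠ a ∧ 1 ≠ b then 1 else if 2 ≠ a ∧ 2 ≠ b then 2 else 3

/-- The Sprague–Grundy sequence of the game G_{1,2d}: SG d 1 = 0 and
    SG d n = mex {SG d (n-1), SG d ⌈n/(2d)⌉} for n ≥ 2. -/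
def SG (d : ℕ) : ℕ → ℕ
  | 0 => 0
  | 1 => 0
  | n + 2 => mex2 (SG d (n + 1)) (SG d ((n + 2 + (2 * d - 1)) / (2 * d)))
decreasing_by
  · omega
  · rcases Nat.eq_zero_or_pos d with h | h
    · simp [h]
    · have h2 : 0 < 2 * d := by omega
      rw [Nat.div_lt_iff_lt_mul h2]
      simp only [Nat.succ_eq_add_one]
      have h6 : (n + 1 + 1) * 2 ≤ (n + 1 + 1) * (2 * d) := Nat.mul_le_mul_left _ (by omega)
      have h8 : 2 * (2 * d) ≤ (n + 1 + 1) * (2 * d) := Nat.mul_le_mul_right _ (by omega)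
      omega

/-!
`SG d n = 0` exactly when both options `n - 1` and `⌈n / 2d⌉` have nonzero value. Every even
`n ≥ 2` has nonzero value: going from the odd number `n - 1` to `n` does not change `⌈· / 2d⌉`,
so if `SG d (n - 1) ≠ 0` then its option `⌈(n - 1) / 2d⌉ = ⌈n / 2d⌉` has value `0` (its other
option `n - 2` being even). For `n = 4dk + ℓ` as in the theorem, `n - 1` is even and
`⌈n / 2d⌉ = 2k + 2`, so both options of `n` have nonzero value.
-/

lemma mex2_eq_zero_iff {a b : ℕ} : mex2 a b = 0 ↔ a ≠ 0 ∧ b ≠ 0 := by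
  unfold mex2
  split_ifs <;> simp <;> omega

lemma Nat.add_one_ceilDiv_of_not_dvd {a b : ℕ} (h : ¬ b ∣ a) : (a + 1) ⌈/⌉ b = a ⌈/⌉ b := by
  rcases b.eq_zero_or_pos with rfl | hb
  · simp
  refine eq_of_forall_ge_iff fun c ↦ ?_
  rw [ceilDiv_le_iff_le_mul hb, ceilDiv_le_iff_le_mul hb]
  exact ⟨fun h' ↦ (Nat.le_succ a).trans h', fun h' ↦ h'.lt_of_ne fun e ↦ h ⟨c, e⟩⟩

lemma Nat.ceilDiv_eq_add_one {a b c : ℕ} (hb : 0 < b) (hlt : b * c < a) (hle : a ≤ b * (c + 1)) :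
    a ⌈/⌉ b = c + 1 :=
  le_antisymm ((ceilDiv_le_iff_le_mul hb).2 hle)
    (Nat.lt_of_not_le fun h ↦ hlt.not_ge ((ceilDiv_le_iff_le_mul hb).1 h))

lemma SG_add_two (d n : ℕ) :
    SG d (n + 2) = mex2 (SG d (n + 1)) (SG d ((n + 2) ⌈/⌉ (2 * d))) := by
  rw [SG, Nat.ceilDiv_eq_add_pred_div]
  rcases d.eq_zero_or_pos with rfl | hd
  · simp
  · congr 3
    omega

lemma SG_add_two_eq_zero_iff (d n : ℕ) :
    SG d (n + 2) = 0 ↔ SG d (n + 1) ≠ 0 ∧ SG d ((n + 2) ⌈/⌉ (2 * d)) ≠ 0 := by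
  rw [SG_add_two, mex2_eq_zero_iff]

lemma SG_two_mul_add_two_ne_zero (d k : ℕ) : SG d (2 * k + 2) ≠ 0 := by
  induction k with
  | zero => rw [Ne, SG_add_two_eq_zero_iff]; simp [SG]
  | succ k ih =>
    have hodd : ¬ 2 * d ∣ 2 * k + 3 := fun h ↦ by
      have := dvd_of_mul_right_dvd h
      omega
    have hceil : (2 * k + 4) ⌈/⌉ (2 * d) = (2 * k + 3) ⌈/⌉ (2 * d) :=
      Nat.add_one_ceilDiv_of_not_dvd hodd
    rw [show 2 * (k + 1) + 2 = (2 * k + 2) + 2 by ring, Ne, SG_add_two_eq_zero_iff, hceil]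
    rintro ⟨hprev, hopt⟩
    exact hprev ((SG_add_two_eq_zero_iff d (2 * k + 1)).2 ⟨ih, hopt⟩)

lemma SG_ne_zero_of_even {d n : ℕ} (hn : Even n) (h2 : 2 ≤ n) : SG d n ≠ 0 := by
  obtain ⟨j, rfl⟩ := hn
  obtain ⟨k, rfl⟩ : ∃ k, j = k + 1 := ⟨j - 1, by omega⟩
  simpa [two_mul, add_add_add_comm] using SG_two_mul_add_two_ne_zero d k

theorem stmt_5_general (d : ℕ) (n : ℕ) (ℓ : ℕ) (hodd : Odd ℓ)
    (hl1 : 2 * d + 1 ≤ ℓ) (hl2 : ℓ ≤ 4 * d - 1) (hmod : n % (4 * d) = ℓ) :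
    SG d n = 0 := by
  obtain ⟨t, rfl⟩ := hodd
  have hℓ : 2 * t + 1 < 4 * d := by omega
  obtain ⟨k, hn⟩ : ∃ k, n = 4 * d * k + (2 * t + 1) :=
    ⟨n / (4 * d), by rw [← hmod, Nat.div_add_mod]⟩
  obtain ⟨m, rfl⟩ : ∃ m, n = m + 2 := ⟨n - 2, by omega⟩
  have hceil : (m + 2) ⌈/⌉ (2 * d) = 2 * k + 2 :=
    Nat.ceilDiv_eq_add_one (by omega) (by rw [hn]; ring_nf; omega) (by rw [hn]; ring_nf; omega)
  rw [SG_add_two_eq_zero_iff, hceil]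
  exact ⟨SG_ne_zero_of_even ⟨2 * d * k + t, by linarith⟩ (by omega),
    SG_two_mul_add_two_ne_zero d k⟩

theorem stmt_5 (d : ℕ) (hd : 1 ≤ d) (n : ℕ) (hn : 2 ≤ n) (ℓ : ℕ) (hodd : Odd ℓ)
    (hl1 : 2 * d + 1 ≤ ℓ) (hl2 : ℓ ≤ 4 * d - 1) (hmod : n % (4 * d) = ℓ) :
    SG d n = 0 :=
  stmt_5_general d n ℓ hodd hl1 hl2 hmod
end

section
/- (Reduction 3) Let d ≥ 1. For any m ≥ 0, even c₁, c₂, c₃ and odd c₄ with 0 ≤ cᵢ ≤ 2d-1, writing n = 1 + 2d·c₁ + (2d)²·c₂ + (2d)³·c₃ + (2d)⁴·c₄ + (2d)⁵·m, one has SG(n) = SG(c₁ + 2d·c₂ + (2d)²·c₃ + (2d)³·c₄ + (2d)⁴·m). -/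
lemma mex2_le_two (a b : ℕ) : mex2 a b ≤ 2 := by
  unfold mex2; grind

lemma mex2_zero_left {b : ℕ} (hb : b ≠ 0) (hb2 : b ≤ 2) : mex2 0 b = 3 - b := by
  interval_cases b <;> simp_all [mex2]

lemma mex2_zero_right {a : ℕ} (ha : a ≠ 0) (ha2 : a ≤ 2) : mex2 a 0 = 3 - a := by
  interval_cases a <;> simp_all [mex2]

lemma SG_le_two (d n : ℕ) : SG d n ≤ 2 := by
  match n with
  | 0 | 1 => simp [SG]
  | n + 2 => rw [SG]; exact mex2_le_two _ _

lemma SG_two_mul_add_succ {d q a : ℕ} (ha : a < 2 * d) (hqa : q ≠ 0 ∨ a ≠ 0) :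
    SG d (2 * d * q + a + 1) = mex2 (SG d (2 * d * q + a)) (SG d (q + 1)) := by
  obtain ⟨n, hn⟩ : ∃ n, 2 * d * q + a = n + 1 := ⟨2 * d * q + a - 1, by
    rcases hqa with hq | ha0
    · have : 2 * d ≤ 2 * d * q := Nat.le_mul_of_pos_right _ (Nat.pos_of_ne_zero hq)
      omega
    · omega⟩
  have hceil : (n + 2 + (2 * d - 1)) / (2 * d) = q + 1 := by
    rw [show n + 2 + (2 * d - 1) = a + 2 * d * (q + 1) by rw [mul_add]; omega,
      Nat.add_mul_div_left _ _ (by omega), Nat.div_eq_of_lt ha, zero_add]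
  rw [hn, SG, hceil]

lemma SG_ne_zero_of_succ_eq_zero {d j : ℕ} (hj : j ≠ 0) (h : SG d (j + 1) = 0) : SG d j ≠ 0 := by
  obtain ⟨i, rfl⟩ := Nat.exists_eq_succ_of_ne_zero hj
  rw [SG] at h
  exact (mex2_eq_zero_iff.mp h).1

lemma SG_two_mul_add_succ_ne_zero_of_eq_zero {d q a : ℕ} (ha : a < 2 * d)
    (hqa : q ≠ 0 ∨ a ≠ 0) (hs : SG d (q + 1) = 0) : SG d (2 * d * q + a + 1) ≠ 0 := by
  rw [SG_two_mul_add_succ ha hqa, hs, Ne, mex2_eq_zero_iff]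
  exact fun h => h.2 rfl

lemma SG_two_mul_add_succ_eq_of_ne_zero_of_last {d q : ℕ} (hs : SG d (q + 1) ≠ 0)
    (hlast : SG d (2 * d * q) ≠ 0) {a : ℕ} (ha : a < 2 * d) :
    SG d (2 * d * q + a + 1) = if Even a then 0 else 3 - SG d (q + 1) := by
  have hq : q ≠ 0 := by rintro rfl; exact hs (by simp [SG])
  have hs2 := SG_le_two d (q + 1)
  induction a with
  | zero =>
    rw [if_pos Even.zero, SG_two_mul_add_succ ha (Or.inl hq), mex2_eq_zero_iff]
    exact ⟨hlast, hs⟩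
  | succ a ih =>
    rw [SG_two_mul_add_succ ha (Or.inr a.succ_ne_zero), ← add_assoc, ih (by omega)]
    by_cases hev : Even a
    · simp only [hev, Nat.even_add_one, if_true, not_true, if_false]
      exact mex2_zero_left hs hs2
    · simp only [hev, Nat.even_add_one, if_false, not_false_eq_true, if_true]
      exact mex2_eq_zero_iff.mpr ⟨by omega, hs⟩

lemma two_mul_mul_succ_eq_add {d : ℕ} (hd : d ≠ 0) (q : ℕ) :
    2 * d * (q + 1) = 2 * d * q + (2 * d - 1) + 1 := by
  rw [mul_add]; omega

lemma SG_two_mul_succ_ne_zero {d : ℕ} (hd : d ≠ 0) (q : ℕ) : SG d (2 * d * (q + 1)) ≠ 0 := by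
  have hlast : 2 * d - 1 < 2 * d := by omega
  rw [two_mul_mul_succ_eq_add hd]
  induction q with
  | zero => exact SG_two_mul_add_succ_ne_zero_of_eq_zero hlast (Or.inr (by omega)) (by simp [SG])
  | succ q ih =>
    by_cases hs : SG d (q + 1 + 1) = 0
    · exact SG_two_mul_add_succ_ne_zero_of_eq_zero hlast (Or.inl q.succ_ne_zero) hs
    · rw [← two_mul_mul_succ_eq_add hd] at ih
      rw [SG_two_mul_add_succ_eq_of_ne_zero_of_last hs ih hlast,
        if_neg (Nat.not_even_iff.mpr (by omega))]
      have := SG_le_two d (q + 1 + 1)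
      omega

lemma SG_two_mul_add_succ_eq_of_ne_zero {d q : ℕ} (hs : SG d (q + 1) ≠ 0) {a : ℕ}
    (ha : a < 2 * d) : SG d (2 * d * q + a + 1) = if Even a then 0 else 3 - SG d (q + 1) := by
  obtain ⟨q, rfl⟩ : ∃ i, q = i + 1 := Nat.exists_eq_succ_of_ne_zero (by rintro rfl; simp [SG] at hs)
  exact SG_two_mul_add_succ_eq_of_ne_zero_of_last hs (SG_two_mul_succ_ne_zero (by omega) q) ha

lemma SG_two_mul_add_succ_eq_zero_of_even {d q a : ℕ} (ha : a < 2 * d) (hev : Even a)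
    (hs : SG d (q + 1) ≠ 0) : SG d (2 * d * q + a + 1) = 0 := by
  rw [SG_two_mul_add_succ_eq_of_ne_zero hs ha, if_pos hev]

lemma SG_two_mul_add_succ_ne_zero_of_odd {d a : ℕ} (ha : a < 2 * d) (hodd : Odd a) (q : ℕ) :
    SG d (2 * d * q + a + 1) ≠ 0 := by
  by_cases hs : SG d (q + 1) = 0
  · exact SG_two_mul_add_succ_ne_zero_of_eq_zero ha (Or.inr (by rintro rfl; simp at hodd)) hs
  · rw [SG_two_mul_add_succ_eq_of_ne_zero hs ha, if_neg (Nat.not_even_iff_odd.mpr hodd)]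
    have := SG_le_two d (q + 1)
    omega

lemma SG_two_mul_eq_three_sub {d j : ℕ} (hd : d ≠ 0) (hs : SG d j ≠ 0) :
    SG d (2 * d * j) = 3 - SG d j := by
  obtain ⟨q, rfl⟩ : ∃ i, j = i + 1 := Nat.exists_eq_succ_of_ne_zero (by rintro rfl; simp [SG] at hs)
  rw [two_mul_mul_succ_eq_add hd, SG_two_mul_add_succ_eq_of_ne_zero hs (by omega), if_neg (Nat.not_even_iff.mpr (by omega))]

lemma SG_two_mul_add_one_eq_of_succ_eq_zero {d j : ℕ} (hd : d ≠ 0) (h : SG d (j + 1) = 0) :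
    SG d (2 * d * j + 1) = SG d j := by
  rcases eq_or_ne j 0 with rfl | hj
  · simp [SG]
  have hs := SG_ne_zero_of_succ_eq_zero hj h
  have hs2 := SG_le_two d j
  rw [← add_zero (2 * d * j), SG_two_mul_add_succ (by omega) (Or.inl hj), add_zero, h,
    SG_two_mul_eq_three_sub hd hs, mex2_zero_right (by omega) (by omega)]
  omega

theorem stmt_11_general (d : ℕ) (hd : 1 ≤ d) (c₁ c₂ c₃ c₄ m : ℕ)
    (h1 : Even c₁) (h3 : Even c₃) (h4 : Odd c₄)
    (b1 : c₁ ≤ 2 * d - 1) (b2 : c₂ ≤ 2 * d - 1) (b3 : c₃ ≤ 2 * d - 1)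
    (b4 : c₄ ≤ 2 * d - 1) :
    SG d (1 + 2 * d * c₁ + (2 * d) ^ 2 * c₂ + (2 * d) ^ 3 * c₃ + (2 * d) ^ 4 * c₄ +
        (2 * d) ^ 5 * m) =
      SG d (c₁ + 2 * d * c₂ + (2 * d) ^ 2 * c₃ + (2 * d) ^ 3 * c₄ + (2 * d) ^ 4 * m) := by
  set j₄ := c₄ + 2 * d * m
  set j₃ := c₃ + 2 * d * j₄
  set j₂ := c₂ + 2 * d * j₃
  set j₁ := c₁ + 2 * d * j₂
  have s₄ : SG d (j₄ + 1) ≠ 0 := by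
    rw [show j₄ + 1 = 2 * d * m + c₄ + 1 by ring]
    exact SG_two_mul_add_succ_ne_zero_of_odd (by omega) h4 m
  have s₃ : SG d (j₃ + 1) = 0 := by
    rw [show j₃ + 1 = 2 * d * j₄ + c₃ + 1 by ring]
    exact SG_two_mul_add_succ_eq_zero_of_even (by omega) h3 s₄
  have s₂ : SG d (j₂ + 1) ≠ 0 := by
    rw [show j₂ + 1 = 2 * d * j₃ + c₂ + 1 by ring]
    have : j₄ ≤ 2 * d * j₄ := Nat.le_mul_of_pos_left _ (by omega)
    exact SG_two_mul_add_succ_ne_zero_of_eq_zero (by omega) (Or.inl (by have := h4.pos; omega)) s₃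
  have s₁ : SG d (j₁ + 1) = 0 := by
    rw [show j₁ + 1 = 2 * d * j₂ + c₁ + 1 by ring]
    exact SG_two_mul_add_succ_eq_zero_of_even (by omega) h1 s₂
  convert SG_two_mul_add_one_eq_of_succ_eq_zero (by omega) s₁ using 2 <;> ring

theorem stmt_11 (d : ℕ) (hd : 1 ≤ d) (c₁ c₂ c₃ c₄ m : ℕ)
    (h1 : Even c₁) (h2 : Even c₂) (h3 : Even c₃) (h4 : Odd c₄)
    (b1 : c₁ ≤ 2 * d - 1) (b2 : c₂ ≤ 2 * d - 1) (b3 : c₃ ≤ 2 * d - 1)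
    (b4 : c₄ ≤ 2 * d - 1) :
    SG d (1 + 2 * d * c₁ + (2 * d) ^ 2 * c₂ + (2 * d) ^ 3 * c₃ + (2 * d) ^ 4 * c₄ +
        (2 * d) ^ 5 * m) =
      SG d (c₁ + 2 * d * c₂ + (2 * d) ^ 2 * c₃ + (2 * d) ^ 3 * c₄ + (2 * d) ^ 4 * m) :=
  stmt_11_general d hd c₁ c₂ c₃ c₄ m h1 h3 h4 b1 b2 b3 b4
end
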